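/- Let g ≥ 1 and t = (t₁,…,t_g) be elements of a commutative ring (e.g. ℂ). Define a_n(t) for 0 ≤ n ≤ 2g by the polynomial identity ∏_{j=1}^g (u² − u·t_j + 1) = Σ_{n=0}^{2g} (−1)^n a_n(t) u^{2g−n}. Then a_{2g−n}(t) = a_n(t) for 0 ≤ n ≤ g, and for every n with 0 ≤ n ≤ g one has a_n(t) = Σ_{j=0}^{⌊n/2⌋} C(g + 2j − n, j) · e_{n−2j}(t), where C(·,·) is the binomial coefficient and e_k is the elementary symmetric polynomial of degree k in g variables (with e₀ = 1). -/
import Mathlib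

open Polynomial

/-- The elementary symmetric polynomial of degree `k` in `g` variables over a
commutative ring, `e_k(t) = Σ_{i₁<⋯<i_k} t_{i₁}⋯t_{i_k}` (with `e₀ = 1`). -/
def esymm {R : Type*} [CommRing R] (g k : ℕ) (t : Fin g → R) : R :=
  ∑ s ∈ Finset.univ.powersetCard k, ∏ j ∈ s, t j

section Aux

variable {R : Type*} [CommRing R]

private lemma myReflect_factor (c : R) :
    reflect 2 (X ^ 2 - C c * X + 1 : R[X]) = X ^ 2 - C c * X + 1 := by
  have h : (X ^ 2 - C c * X + 1 : R[X])
      = C 1 * X ^ 2 + (C (-c) * X ^ 1 + C 1 * X ^ 0) := by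
    simp only [map_one, map_neg, one_mul, pow_one, pow_zero]
    ring
  have r2 : revAt 2 2 = 0 := by rw [revAt_le (by norm_num)]
  have r1 : revAt 2 1 = 1 := by rw [revAt_le (by norm_num)]
  have r0 : revAt 2 0 = 2 := revAt_zero 2
  rw [h, reflect_add, reflect_add, reflect_C_mul_X_pow, reflect_C_mul_X_pow,
    reflect_C_mul_X_pow, r2, r1, r0]
  simp only [map_one, map_neg, one_mul, pow_one, pow_zero]
  ring

private lemma myReflect_prod {ι : Type*} (s : Finset ι) (f : ι → R[X])
    (h2 : ∀ i, (f i).natDegree ≤ 2) (hr : ∀ i, reflect 2 (f i) = f i) :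
    reflect (2 * s.card) (∏ i ∈ s, f i) = ∏ i ∈ s, f i := by
  classical
  induction s using Finset.cons_induction with
  | empty => simp
  | cons a s ha ih =>
    rw [Finset.prod_cons, Finset.card_cons]
    have hd : (∏ i ∈ s, f i).natDegree ≤ 2 * s.card := by
      refine (Polynomial.natDegree_prod_le _ _).trans ?_
      calc ∑ i ∈ s, (f i).natDegree ≤ ∑ _i ∈ s, 2 := Finset.sum_le_sum fun i _ => h2 i
        _ = 2 * s.card := by rw [Finset.sum_const, smul_eq_mul, mul_comm]
    rw [show 2 * (s.card + 1) = 2 + 2 * s.card from by ring,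
      reflect_mul _ _ (h2 a) hd, hr a, ih]

private lemma myExpand (g : ℕ) (t : Fin g → R) :
    (∏ j : Fin g, (X ^ 2 - C (t j) * X + 1) : R[X]) =
    ∑ k ∈ Finset.range (g + 1), ∑ i ∈ Finset.range (g - k + 1),
      C ((-1) ^ k * ((g - k).choose i : R) * esymm g k t) * X ^ (k + 2 * i) := by
  classical
  have h0 : (∏ j : Fin g, (X ^ 2 - C (t j) * X + 1) : R[X])
      = ∏ j : Fin g, ((-(C (t j) * X)) + (X ^ 2 + 1)) := by
    refine Finset.prod_congr rfl fun j _ => by ring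
  rw [h0, Finset.prod_add]
  have hmaps : ∀ S ∈ (Finset.univ : Finset (Fin g)).powerset,
      S.card ∈ Finset.range (g + 1) := by
    intro S hS
    rw [Finset.mem_range, Nat.lt_succ_iff]
    simpa using Finset.card_le_card (Finset.mem_powerset.1 hS)
  rw [← Finset.sum_fiberwise_of_maps_to hmaps]
  refine Finset.sum_congr rfl fun k hk => ?_
  rw [Finset.mem_range, Nat.lt_succ_iff] at hk
  have hfilter : ((Finset.univ : Finset (Fin g)).powerset.filter fun S => S.card = k)
      = Finset.univ.powersetCard k := by
    rw [Finset.powersetCard_eq_filter]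
  rw [hfilter]
  have hterm : ∀ S ∈ (Finset.univ : Finset (Fin g)).powersetCard k,
      (∏ j ∈ S, (-(C (t j) * X))) * ∏ j ∈ Finset.univ \ S, ((X:R[X]) ^ 2 + 1)
      = C ((-1) ^ k * ∏ j ∈ S, t j) * (X ^ k * (X ^ 2 + 1) ^ (g - k)) := by
    intro S hS
    have hcard : S.card = k := (Finset.mem_powersetCard.1 hS).2
    have hA : (∏ j ∈ S, (-(C (t j) * X)) : R[X])
        = C ((-1) ^ k * ∏ j ∈ S, t j) * X ^ k := by
      calc (∏ j ∈ S, (-(C (t j) * X)) : R[X])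
          = ∏ j ∈ S, ((-1 : R[X]) * (C (t j) * X)) := by
            refine Finset.prod_congr rfl fun j _ => by ring
        _ = (∏ _j ∈ S, (-1 : R[X])) * ∏ j ∈ S, (C (t j) * X) := by
            rw [Finset.prod_mul_distrib]
        _ = (-1 : R[X]) ^ k * ((∏ j ∈ S, C (t j)) * ∏ _j ∈ S, (X : R[X])) := by
            rw [Finset.prod_const, hcard, Finset.prod_mul_distrib]
        _ = C ((-1) ^ k * ∏ j ∈ S, t j) * X ^ k := by
            rw [Finset.prod_const, hcard, ← map_prod, map_mul, map_pow, map_neg, map_one, mul_assoc]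
    have hB : (∏ j ∈ Finset.univ \ S, ((X:R[X]) ^ 2 + 1)) = ((X:R[X]) ^ 2 + 1) ^ (g - k) := by
      rw [Finset.prod_const, Finset.card_sdiff_of_subset (Finset.subset_univ S), Finset.card_univ,
        Fintype.card_fin, hcard]
    rw [hA, hB, mul_assoc]
  rw [Finset.sum_congr rfl hterm, ← Finset.sum_mul, ← map_sum,
    ← Finset.mul_sum, ← esymm]
  have hpow : ((X:R[X]) ^ 2 + 1) ^ (g - k)
      = ∑ i ∈ Finset.range (g - k + 1), X ^ (2 * i) * (((g - k).choose i : R[X])) := by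
    rw [add_pow]
    refine Finset.sum_congr rfl fun i _ => ?_
    rw [one_pow, mul_one, ← pow_mul]
  rw [hpow, Finset.mul_sum, Finset.mul_sum]
  refine Finset.sum_congr rfl fun i _ => ?_
  simp only [map_mul, map_pow, map_neg, map_one, map_natCast, pow_add]
  ring

private lemma myCoeff (g n : ℕ) (hn : n ≤ g) (t : Fin g → R) :
    (∏ j : Fin g, (X ^ 2 - C (t j) * X + 1) : R[X]).coeff n
      = ∑ j ∈ Finset.range (n / 2 + 1),
          (-1 : R) ^ n * (((g + 2 * j - n).choose j : R) * esymm g (n - 2 * j) t) := by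
  classical
  rw [myExpand, finset_sum_coeff]
  have hc : ∀ k ∈ Finset.range (g + 1),
      (∑ i ∈ Finset.range (g - k + 1),
        C ((-1) ^ k * ((g - k).choose i : R) * esymm g k t) * X ^ (k + 2 * i)).coeff n
      = ∑ i ∈ Finset.range (g - k + 1),
          if k + 2 * i = n then ((-1 : R) ^ k * ((g - k).choose i : R) * esymm g k t) else 0 := by
    intro k _
    rw [finset_sum_coeff]
    refine Finset.sum_congr rfl fun i _ => ?_
    rw [coeff_C_mul, coeff_X_pow]
    by_cases h : k + 2 * i = n
    · rw [if_pos h, if_pos h.symm, mul_one]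
    · rw [if_neg h, if_neg fun h' => h h'.symm, mul_zero]
  rw [Finset.sum_congr rfl hc, Finset.sum_sigma']
  rw [← Finset.sum_filter]
  refine Finset.sum_nbij' (fun p => p.2) (fun j => ⟨n - 2 * j, j⟩) ?_ ?_ ?_ ?_ ?_
  · intro p hp
    simp only [Finset.mem_filter, Finset.mem_sigma, Finset.mem_range] at hp
    simp only [Finset.mem_range]
    omega
  · intro j hj
    simp only [Finset.mem_range] at hj
    simp only [Finset.mem_filter, Finset.mem_sigma, Finset.mem_range]
    omega
  · intro p hp
    simp only [Finset.mem_filter, Finset.mem_sigma, Finset.mem_range] at hp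
    ext
    · simp; omega
    · simp
  · intro j hj; rfl
  · intro p hp
    simp only [Finset.mem_filter, Finset.mem_sigma, Finset.mem_range] at hp
    obtain ⟨⟨hk, hi⟩, heq⟩ := hp
    have h1 : g - p.1 = g + 2 * p.2 - n := by omega
    have h2 : p.1 = n - 2 * p.2 := by omega
    have hsign : (-1 : R) ^ p.1 = (-1 : R) ^ n := by
      have : (-1 : R) ^ p.1 * ((-1 : R) ^ 2) ^ p.2 = (-1 : R) ^ n := by
        rw [← pow_mul, ← pow_add, heq]
      simpa using this
    rw [h1, hsign, h2]
    ring

end Aux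

/-- If `∏_{j=1}^g (u² − t_j u + 1) = Σ_{n=0}^{2g} (−1)ⁿ aₙ u^{2g−n}`, then the
coefficients are palindromic, `a_{2g−n} = a_n` for `0 ≤ n ≤ g`, and
`a_n = Σ_{j=0}^{⌊n/2⌋} C(g+2j−n, j) e_{n−2j}(t)` for `0 ≤ n ≤ g`. -/
theorem coeff_prod_quadratic_palindromic_and_esymm
    {R : Type*} [CommRing R] (g : ℕ) (hg : 1 ≤ g) (t : Fin g → R) (a : ℕ → R)
    (ha : (∏ j : Fin g, (X ^ 2 - C (t j) * X + 1) : R[X])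
        = ∑ n ∈ Finset.range (2 * g + 1), (-1 : R[X]) ^ n * C (a n) * X ^ (2 * g - n)) :
    (∀ n : ℕ, n ≤ g → a (2 * g - n) = a n) ∧
    (∀ n : ℕ, n ≤ g → a n = ∑ j ∈ Finset.range (n / 2 + 1),
        ((g + 2 * j - n).choose j : R) * esymm g (n - 2 * j) t) := by
  classical
  have hC : ∀ m : ℕ, (-1 : R[X]) ^ m * C (a m) = C ((-1) ^ m * a m) := by
    intro m; rw [map_mul, map_pow, map_neg, map_one]
  have key : ∀ m : ℕ, m ≤ 2 * g → (∏ j : Fin g, (X ^ 2 - C (t j) * X + 1) : R[X]).coeff (2 * g - m) = (-1 : R) ^ m * a m := by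
    intro m hm
    rw [ha, finset_sum_coeff]
    rw [Finset.sum_eq_single m]
    · rw [hC, coeff_C_mul, coeff_X_pow, if_pos rfl, mul_one]
    · intro b hb hne
      rw [Finset.mem_range] at hb
      rw [hC, coeff_C_mul, coeff_X_pow, if_neg (by omega), mul_zero]
    · intro h
      exact absurd (Finset.mem_range.2 (by omega)) h
  have hrefl : reflect (2 * g) (∏ j : Fin g, (X ^ 2 - C (t j) * X + 1) : R[X]) = ∏ j : Fin g, (X ^ 2 - C (t j) * X + 1) := by
    have := myReflect_prod (Finset.univ : Finset (Fin g))
      (fun j => (X ^ 2 - C (t j) * X + 1 : R[X]))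
      (fun j => by
        refine (natDegree_add_le _ _).trans (max_le ((natDegree_sub_le _ _).trans
          (max_le (natDegree_X_pow_le 2) ((natDegree_C_mul_le _ _).trans (natDegree_X_le.trans one_le_two)))) (natDegree_one.le.trans zero_le_two))) (fun j => myReflect_factor (t j))
    rwa [Finset.card_univ, Fintype.card_fin] at this
  have hsym : ∀ n : ℕ, n ≤ 2 * g → (∏ j : Fin g, (X ^ 2 - C (t j) * X + 1) : R[X]).coeff n = (∏ j : Fin g, (X ^ 2 - C (t j) * X + 1) : R[X]).coeff (2 * g - n) := by
    intro n hn
    conv_lhs => rw [← hrefl]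
    rw [coeff_reflect, revAt_le hn]
  have hu : ∀ n : ℕ, (-1 : R) ^ n * (-1 : R) ^ n = 1 := by
    intro n
    rw [← pow_add, ← two_mul, pow_mul]
    norm_num
  constructor
  · intro n hn
    have e1 : (-1 : R) ^ (2 * g - n) = (-1 : R) ^ n := by
      have h2 : (-1 : R) ^ (2 * g - n) * (-1 : R) ^ n = 1 := by
        rw [← pow_add, show 2 * g - n + n = 2 * g from by omega, pow_mul]
        norm_num
      calc (-1 : R) ^ (2 * g - n)
          = (-1 : R) ^ (2 * g - n) * ((-1 : R) ^ n * (-1 : R) ^ n) := by rw [hu, mul_one]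
        _ = ((-1 : R) ^ (2 * g - n) * (-1 : R) ^ n) * (-1 : R) ^ n := by ring
        _ = (-1 : R) ^ n := by rw [h2, one_mul]
    have k1 : (∏ j : Fin g, (X ^ 2 - C (t j) * X + 1) : R[X]).coeff (2 * g - n) = (-1 : R) ^ n * a n := key n (by omega)
    have k2 : (∏ j : Fin g, (X ^ 2 - C (t j) * X + 1) : R[X]).coeff n = (-1 : R) ^ n * a (2 * g - n) := by
      have := key (2 * g - n) (by omega)
      rwa [show 2 * g - (2 * g - n) = n from by omega, e1] at this
    have h1 : (-1 : R) ^ n * a (2 * g - n) = (-1 : R) ^ n * a n := by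
      rw [← k2, hsym n (by omega), k1]
    have h2 : ((-1 : R) ^ n * (-1 : R) ^ n) * a (2 * g - n)
        = ((-1 : R) ^ n * (-1 : R) ^ n) * a n := by
      rw [mul_assoc, h1, mul_assoc]
    rwa [hu, one_mul, one_mul] at h2
  · intro n hn
    have k1 : (∏ j : Fin g, (X ^ 2 - C (t j) * X + 1) : R[X]).coeff (2 * g - n) = (-1 : R) ^ n * a n := key n (by omega)
    have hc : (∏ j : Fin g, (X ^ 2 - C (t j) * X + 1) : R[X]).coeff n = ∑ j ∈ Finset.range (n / 2 + 1),
        (-1 : R) ^ n * (((g + 2 * j - n).choose j : R) * esymm g (n - 2 * j) t) :=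
      myCoeff g n hn t
    rw [← Finset.mul_sum] at hc
    have h1 : (-1 : R) ^ n * a n = (-1 : R) ^ n * ∑ j ∈ Finset.range (n / 2 + 1),
        ((g + 2 * j - n).choose j : R) * esymm g (n - 2 * j) t := by
      rw [← k1, ← hsym n (by omega), hc]
    have h2 := congrArg (fun x => (-1 : R) ^ n * x) h1
    simp only [← mul_assoc, hu, one_mul] at h2
    exact h2
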